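/- Uniform length of normalising reductions: in the λ!-calculus, any two →w-reduction paths from a term t to a →w-normal form have the same length (in fact the same number of dB-steps and the same number of s!/d!-steps). -/
import Mathlib


/-! # The Bang Calculus Revisited: common definitions.

Terms are represented with de Bruijn indices, so that all the meta-level
substitutions are capture-avoiding by construction. -/

/-- Terms of the λ!-calculus.  `esub t u` is the explicit substitution
`t[0\u]`: the (anonymous) binder scopes over `t`, not over `u`. -/
inductive Tm : Type
  | var : ℕ → Tm
  | app : Tm → Tm → Tm
  | lam : Tm → Tm
  | bang : Tm → Tm
  | der : Tm → Tm
  | esub : Tm → Tm → Tm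
  deriving DecidableEq

namespace Tm

/-- lifting a renaming under a binder -/
def liftR (f : ℕ → ℕ) : ℕ → ℕ
  | 0 => 0
  | k + 1 => f k + 1

/-- renaming of free variables -/
def rename (f : ℕ → ℕ) : Tm → Tm
  | var k => var (f k)
  | app t u => app (rename f t) (rename f u)
  | lam t => lam (rename (liftR f) t)
  | bang t => bang (rename f t)
  | der t => der (rename f t)
  | esub t u => esub (rename (liftR f) t) (rename f u)

/-- lifting a simultaneous substitution under a binder -/
def liftS (σ : ℕ → Tm) : ℕ → Tm
  | 0 => var 0
  | k + 1 => rename (· + 1) (σ k)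

/-- simultaneous (capture-avoiding) substitution -/
def subst (σ : ℕ → Tm) : Tm → Tm
  | var k => σ k
  | app t u => app (subst σ t) (subst σ u)
  | lam t => lam (subst (liftS σ) t)
  | bang t => bang (subst σ t)
  | der t => der (subst σ t)
  | esub t u => esub (subst (liftS σ) t) (subst σ u)

/-- capture-avoiding substitution of `u` for the variable `0` of `t`,
where the result is placed under `n` extra binders (and `u` already lives
at that depth). -/
def substIn (n : ℕ) (u : Tm) (t : Tm) : Tm :=
  subst (fun k => match k with
    | 0 => u
    | k + 1 => var (k + n)) t

/-- capture-avoiding meta-level substitution `t{0 := u}` -/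
def subst0 (u : Tm) (t : Tm) : Tm := substIn 0 u t

/-- plugging a term into a list context `L ::= ◻ | L[x\t]`; the head of the
list is the argument of the outermost explicit substitution. -/
def plug : List Tm → Tm → Tm
  | [], s => s
  | e :: L, s => esub (plug L s) e

/-- the w-size of a term -/
def wsize : Tm → ℕ
  | var _ => 0
  | app t u => 1 + wsize t + wsize u
  | lam t => 1 + wsize t
  | bang _ => 0
  | der t => 1 + wsize t
  | esub t u => 1 + wsize t + wsize u

end Tm

/-- the names of the three rewriting rules of the λ!-calculus -/
inductive Rule : Type
  | dB | sb | db
  deriving DecidableEq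

open Tm in
/-- the three rewriting rules, applied at the root (at a distance) -/
inductive Root : Rule → Tm → Tm → Prop
  | dB (L : List Tm) (t u : Tm) :
      Root .dB (app (plug L (lam t)) u)
               (plug L (esub t (rename (· + L.length) u)))
  | sb (L : List Tm) (t u : Tm) :
      Root .sb (esub t (plug L (bang u))) (plug L (substIn L.length u t))
  | db (L : List Tm) (t : Tm) :
      Root .db (der (plug L (bang t))) (plug L t)

/-- closure of each rule under weak contexts (no reduction under `bang`) -/
inductive Step : Rule → Tm → Tm → Prop
  | root {r : Rule} {t t' : Tm} : Root r t t' → Step r t t'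
  | appL {r t t'} (u : Tm) : Step r t t' → Step r (Tm.app t u) (Tm.app t' u)
  | appR {r u u'} (t : Tm) : Step r u u' → Step r (Tm.app t u) (Tm.app t u')
  | lam {r t t'} : Step r t t' → Step r (Tm.lam t) (Tm.lam t')
  | der {r t t'} : Step r t t' → Step r (Tm.der t) (Tm.der t')
  | esubL {r t t'} (u : Tm) : Step r t t' → Step r (Tm.esub t u) (Tm.esub t' u)
  | esubR {r u u'} (t : Tm) : Step r u u' → Step r (Tm.esub t u) (Tm.esub t u')

/-- the weak reduction `→w` of the λ!-calculus -/
def StepW (t t' : Tm) : Prop := ∃ r, Step r t t'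

/-- counted weak reduction: `RedCnt t (b, e) u` holds iff `t →w* u` using `b`
dB-steps and `e` steps of kind s!/d!. -/
inductive RedCnt : Tm → ℕ × ℕ → Tm → Prop
  | refl (t : Tm) : RedCnt t (0, 0) t
  | db {t t₁ u : Tm} {b e : ℕ} :
      Step .dB t t₁ → RedCnt t₁ (b, e) u → RedCnt t (b + 1, e) u
  | ex {t t₁ u : Tm} {b e : ℕ} :
      (Step .sb t t₁ ∨ Step .db t t₁) → RedCnt t₁ (b, e) u →
      RedCnt t (b, e + 1) u

mutual
  /-- neutral w-normal terms -/
  inductive NeW : Tm → Prop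
    | var (k : ℕ) : NeW (Tm.var k)
    | app {t u : Tm} : NaW t → NoW u → NeW (Tm.app t u)
    | der {t : Tm} : NbW t → NeW (Tm.der t)
    | esub {t u : Tm} : NeW t → NbW u → NeW (Tm.esub t u)
  /-- neutral-abs w-normal terms -/
  inductive NaW : Tm → Prop
    | bang (t : Tm) : NaW (Tm.bang t)
    | ne {t : Tm} : NeW t → NaW t
    | esub {t u : Tm} : NaW t → NbW u → NaW (Tm.esub t u)
  /-- neutral-bang w-normal terms -/
  inductive NbW : Tm → Prop
    | ne {t : Tm} : NeW t → NbW t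
    | lam {t : Tm} : NoW t → NbW (Tm.lam t)
    | esub {t u : Tm} : NbW t → NbW u → NbW (Tm.esub t u)
  /-- w-normal terms -/
  inductive NoW : Tm → Prop
    | na {t : Tm} : NaW t → NoW t
    | nb {t : Tm} : NbW t → NoW t
end

/-- clashes -/
inductive Clash : Tm → Prop
  | appBang (L : List Tm) (t u : Tm) : Clash (Tm.app (Tm.plug L (Tm.bang t)) u)
  | esubLam (L : List Tm) (t u : Tm) : Clash (Tm.esub t (Tm.plug L (Tm.lam u)))
  | derLam (L : List Tm) (u : Tm) : Clash (Tm.der (Tm.plug L (Tm.lam u)))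
  | appLam (L : List Tm) (t u : Tm) : Clash (Tm.app t (Tm.plug L (Tm.lam u)))

/-- `WSub t s` holds iff `t = W⟨s⟩` for some weak context `W` -/
inductive WSub : Tm → Tm → Prop
  | refl (t : Tm) : WSub t t
  | appL {t s : Tm} (u : Tm) : WSub t s → WSub (Tm.app t u) s
  | appR {u s : Tm} (t : Tm) : WSub u s → WSub (Tm.app t u) s
  | lam {t s : Tm} : WSub t s → WSub (Tm.lam t) s
  | der {t s : Tm} : WSub t s → WSub (Tm.der t) s
  | esubL {t s : Tm} (u : Tm) : WSub t s → WSub (Tm.esub t u) s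
  | esubR {u s : Tm} (t : Tm) : WSub u s → WSub (Tm.esub t u) s

/-- weak clash freeness -/
def Wcf (t : Tm) : Prop := ¬ ∃ s, WSub t s ∧ Clash s

mutual
  /-- neutral weak clash free normal terms -/
  inductive NeCF : Tm → Prop
    | var (k : ℕ) : NeCF (Tm.var k)
    | app {t u : Tm} : NeCF t → NaCF u → NeCF (Tm.app t u)
    | der {t : Tm} : NeCF t → NeCF (Tm.der t)
    | esub {t u : Tm} : NeCF t → NeCF u → NeCF (Tm.esub t u)
  /-- neutral-abs weak clash free normal terms -/
  inductive NaCF : Tm → Prop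
    | bang (t : Tm) : NaCF (Tm.bang t)
    | ne {t : Tm} : NeCF t → NaCF t
    | esub {t u : Tm} : NaCF t → NeCF u → NaCF (Tm.esub t u)
  /-- neutral-bang weak clash free normal terms -/
  inductive NbCF : Tm → Prop
    | ne {t : Tm} : NeCF t → NbCF t
    | lam {t : Tm} : NoCF t → NbCF (Tm.lam t)
    | esub {t u : Tm} : NbCF t → NeCF u → NbCF (Tm.esub t u)
  /-- weak clash free normal terms -/
  inductive NoCF : Tm → Prop
    | na {t : Tm} : NaCF t → NoCF t
    | nb {t : Tm} : NbCF t → NoCF t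
end

/-- Types of system 𝒰: base types, multiset types and arrow types.  A
multiset type is given by a list of types (a representative of the multiset
it determines). -/
inductive Ty : Type
  | base : ℕ → Ty
  | mult : List Ty → Ty
  | arr : List Ty → Ty → Ty

/-- typing contexts: functions from (de Bruijn) variables to multiset types -/
abbrev Ctx := ℕ → Multiset Ty

/-- the context mapping `k` to `M` and anything else to the empty multiset -/
def Ctx.single (k : ℕ) (M : Multiset Ty) : Ctx := fun j => if j = k then M else 0

/-- removing the (type of the) bound variable `0` from a context -/
def Ctx.tail (Γ : Ctx) : Ctx := fun k => Γ (k + 1)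

/-- extending a context with a multiset type for a fresh variable `0` -/
def Ctx.cons (M : Multiset Ty) (Γ : Ctx) : Ctx := fun k =>
  match k with
  | 0 => M
  | k + 1 => Γ k

/-- Sized typing of system 𝒰: `DerU Γ t τ n` means that there is a derivation
of `Γ ⊢ t : τ` whose size (number of rules, not counting `bg`) is `n`. -/
inductive DerU : Ctx → Tm → Ty → ℕ → Prop
  | ax (k : ℕ) (σ : Ty) : DerU (Ctx.single k {σ}) (Tm.var k) σ 1
  | app {Γ Δ : Ctx} {t u : Tm} {M : List Ty} {τ : Ty} {n m : ℕ} :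
      DerU Γ t (Ty.arr M τ) n → DerU Δ u (Ty.mult M) m →
      DerU (Γ + Δ) (Tm.app t u) τ (n + m + 1)
  | abs {Γ : Ctx} {t : Tm} {τ : Ty} {n : ℕ} (M : List Ty) :
      DerU Γ t τ n → Multiset.ofList M = Γ 0 →
      DerU (Ctx.tail Γ) (Tm.lam t) (Ty.arr M τ) (n + 1)
  | es {Γ Δ : Ctx} {t u : Tm} {σ : Ty} {M : List Ty} {n m : ℕ} :
      DerU Γ t σ n → DerU Δ u (Ty.mult M) m → Multiset.ofList M = Γ 0 →
      DerU (Ctx.tail Γ + Δ) (Tm.esub t u) σ (n + m + 1)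
  | bg {t : Tm} (prs : List (Ctx × Ty × ℕ)) :
      (∀ p ∈ prs, DerU p.1 t p.2.1 p.2.2) →
      DerU ((prs.map (·.1)).sum) (Tm.bang t)
           (Ty.mult (prs.map (·.2.1))) ((prs.map (·.2.2)).sum)
  | dr {Γ : Ctx} {t : Tm} {σ : Ty} {n : ℕ} :
      DerU Γ t (Ty.mult [σ]) n → DerU Γ (Tm.der t) σ (n + 1)

/-! ## The source λ-calculus with explicit substitutions (CBN / CBV) -/

/-- terms of the λ-calculus with explicit substitutions (de Bruijn) -/
inductive Lm : Type
  | var : ℕ → Lm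
  | app : Lm → Lm → Lm
  | lam : Lm → Lm
  | esub : Lm → Lm → Lm
  deriving DecidableEq

namespace Lm

def liftR (f : ℕ → ℕ) : ℕ → ℕ
  | 0 => 0
  | k + 1 => f k + 1

def rename (f : ℕ → ℕ) : Lm → Lm
  | var k => var (f k)
  | app t u => app (rename f t) (rename f u)
  | lam t => lam (rename (liftR f) t)
  | esub t u => esub (rename (liftR f) t) (rename f u)

def liftS (σ : ℕ → Lm) : ℕ → Lm
  | 0 => var 0
  | k + 1 => rename (· + 1) (σ k)

def subst (σ : ℕ → Lm) : Lm → Lm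
  | var k => σ k
  | app t u => app (subst σ t) (subst σ u)
  | lam t => lam (subst (liftS σ) t)
  | esub t u => esub (subst (liftS σ) t) (subst σ u)

def substIn (n : ℕ) (u : Lm) (t : Lm) : Lm :=
  subst (fun k => match k with
    | 0 => u
    | k + 1 => var (k + n)) t

/-- capture-avoiding meta-level substitution `t{0 := u}` -/
def subst0 (u : Lm) (t : Lm) : Lm := substIn 0 u t

def plug : List Lm → Lm → Lm
  | [], s => s
  | e :: L, s => esub (plug L s) e

/-- values -/
def IsVal : Lm → Prop
  | var _ => True
  | lam _ => True
  | _ => False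

/-- the n-size of a term -/
def nsize : Lm → ℕ
  | var _ => 0
  | lam t => 1 + nsize t
  | app t _ => 1 + nsize t
  | esub t _ => 1 + nsize t

/-- the v-size of a term -/
def vsize : Lm → ℕ
  | var _ => 0
  | lam _ => 0
  | app t u => 1 + vsize t + vsize u
  | esub t u => 1 + vsize t + vsize u

end Lm

/-- names of the CBN rules -/
inductive NRule : Type
  | dB | s
  deriving DecidableEq

/-- call-by-name reduction (closure of dB and s under CBN contexts) -/
inductive StepN : NRule → Lm → Lm → Prop
  | dB (L : List Lm) (t u : Lm) :
      StepN .dB (Lm.app (Lm.plug L (Lm.lam t)) u)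
                (Lm.plug L (Lm.esub t (Lm.rename (· + L.length) u)))
  | s (t u : Lm) : StepN .s (Lm.esub t u) (Lm.subst0 u t)
  | appL {r t t'} (u : Lm) : StepN r t t' → StepN r (Lm.app t u) (Lm.app t' u)
  | lam {r t t'} : StepN r t t' → StepN r (Lm.lam t) (Lm.lam t')
  | esubL {r t t'} (u : Lm) : StepN r t t' → StepN r (Lm.esub t u) (Lm.esub t' u)

/-- names of the CBV rules -/
inductive VRule : Type
  | dB | sv
  deriving DecidableEq

/-- call-by-value reduction (closure of dB and sv under CBV contexts) -/
inductive StepV : VRule → Lm → Lm → Prop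
  | dB (L : List Lm) (t u : Lm) :
      StepV .dB (Lm.app (Lm.plug L (Lm.lam t)) u)
                (Lm.plug L (Lm.esub t (Lm.rename (· + L.length) u)))
  | sv (L : List Lm) (t v : Lm) (hv : Lm.IsVal v) :
      StepV .sv (Lm.esub t (Lm.plug L v)) (Lm.plug L (Lm.substIn L.length v t))
  | appL {r t t'} (u : Lm) : StepV r t t' → StepV r (Lm.app t u) (Lm.app t' u)
  | appR {r u u'} (t : Lm) : StepV r u u' → StepV r (Lm.app t u) (Lm.app t u')
  | esubL {r t t'} (u : Lm) : StepV r t t' → StepV r (Lm.esub t u) (Lm.esub t' u)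
  | esubR {r u u'} (t : Lm) : StepV r u u' → StepV r (Lm.esub t u) (Lm.esub t u')

mutual
  /-- CBN neutral terms -/
  inductive NeN : Lm → Prop
    | var (k : ℕ) : NeN (Lm.var k)
    | app {t : Lm} (u : Lm) : NeN t → NeN (Lm.app t u)
  /-- CBN normal terms -/
  inductive NoN : Lm → Prop
    | lam {t : Lm} : NoN t → NoN (Lm.lam t)
    | ne {t : Lm} : NeN t → NoN t
end

mutual
  /-- CBV (substituted) variables -/
  inductive VrV : Lm → Prop
    | var (k : ℕ) : VrV (Lm.var k)
    | esub {t u : Lm} : VrV t → NeV u → VrV (Lm.esub t u)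
  /-- CBV neutral terms -/
  inductive NeV : Lm → Prop
    | app₁ {t u : Lm} : VrV t → NoV u → NeV (Lm.app t u)
    | app₂ {t u : Lm} : NeV t → NoV u → NeV (Lm.app t u)
    | esub {t u : Lm} : NeV t → NeV u → NeV (Lm.esub t u)
  /-- CBV normal terms -/
  inductive NoV : Lm → Prop
    | lam (t : Lm) : NoV (Lm.lam t)
    | vr {t : Lm} : VrV t → NoV t
    | ne {t : Lm} : NeV t → NoV t
    | esub {t u : Lm} : NoV t → NeV u → NoV (Lm.esub t u)
end

/-- counted CBN reduction, recording the number of dB- and s-steps -/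
inductive RedCntN : Lm → ℕ × ℕ → Lm → Prop
  | refl (t : Lm) : RedCntN t (0, 0) t
  | db {t t₁ u : Lm} {b e : ℕ} :
      StepN .dB t t₁ → RedCntN t₁ (b, e) u → RedCntN t (b + 1, e) u
  | s {t t₁ u : Lm} {b e : ℕ} :
      StepN .s t t₁ → RedCntN t₁ (b, e) u → RedCntN t (b, e + 1) u

/-- counted CBV reduction, recording the number of dB- and sv-steps -/
inductive RedCntV : Lm → ℕ × ℕ → Lm → Prop
  | refl (t : Lm) : RedCntV t (0, 0) t
  | db {t t₁ u : Lm} {b e : ℕ} :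
      StepV .dB t t₁ → RedCntV t₁ (b, e) u → RedCntV t (b + 1, e) u
  | sv {t t₁ u : Lm} {b e : ℕ} :
      StepV .sv t t₁ → RedCntV t₁ (b, e) u → RedCntV t (b, e + 1) u

/-- the CBN embedding into the λ!-calculus -/
def cbn : Lm → Tm
  | .var k => .var k
  | .lam t => .lam (cbn t)
  | .app t u => .app (cbn t) (.bang (cbn u))
  | .esub t u => .esub (cbn t) (.bang (cbn u))

/-- `deBang t = some s'` iff `t = L⟨!s⟩` and `s' = L⟨s⟩` -/
def deBang : Tm → Option Tm
  | .bang s => some s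
  | .esub t e => (deBang t).map (fun s => Tm.esub s e)
  | _ => none

/-- the CBV embedding into the λ!-calculus -/
def cbv : Lm → Tm
  | .var k => .bang (.var k)
  | .lam t => .bang (.lam (cbv t))
  | .app t u =>
      match deBang (cbv t) with
      | some r => Tm.app r (cbv u)
      | none => Tm.app (.der (cbv t)) (cbv u)
  | .esub t u => .esub (cbv t) (cbv u)

/-- Sized typing of system 𝒩 (call-by-name): `DerN Γ t τ n` means that there
is a derivation of `Γ ⊢ t : τ` of size `n` (counting all rules). -/
inductive DerN : Ctx → Lm → Ty → ℕ → Prop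
  | ax (k : ℕ) (σ : Ty) : DerN (Ctx.single k {σ}) (Lm.var k) σ 1
  | app {Γ : Ctx} {t u : Lm} {τ : Ty} {n : ℕ} (prs : List (Ctx × Ty × ℕ)) :
      DerN Γ t (Ty.arr (prs.map (·.2.1)) τ) n →
      (∀ p ∈ prs, DerN p.1 u p.2.1 p.2.2) →
      DerN (Γ + (prs.map (·.1)).sum) (Lm.app t u) τ
           (n + (prs.map (·.2.2)).sum + 1)
  | abs {Γ : Ctx} {t : Lm} {τ : Ty} {n : ℕ} (M : List Ty) :
      DerN Γ t τ n → Multiset.ofList M = Γ 0 →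
      DerN (Ctx.tail Γ) (Lm.lam t) (Ty.arr M τ) (n + 1)
  | es {Γ : Ctx} {t u : Lm} {τ : Ty} {n : ℕ} (prs : List (Ctx × Ty × ℕ)) :
      DerN Γ t τ n →
      Multiset.ofList (prs.map (·.2.1)) = Γ 0 →
      (∀ p ∈ prs, DerN p.1 u p.2.1 p.2.2) →
      DerN (Ctx.tail Γ + (prs.map (·.1)).sum) (Lm.esub t u) τ
           (n + (prs.map (·.2.2)).sum + 1)

/-- Sized typing of system 𝒱 (call-by-value): `DerV Γ t τ n` means that there
is a derivation of `Γ ⊢ t : τ` of size `n` (each rule counts 1, except that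
`ax` counts the cardinal of its multiset and `abs` contributes the sizes of
its premises plus the number of premises). -/
inductive DerV : Ctx → Lm → Ty → ℕ → Prop
  | ax (k : ℕ) (M : List Ty) :
      DerV (Ctx.single k (Multiset.ofList M)) (Lm.var k) (Ty.mult M) M.length
  | es {Γ Δ : Ctx} {t u : Lm} {σ : Ty} {M : List Ty} {n m : ℕ} :
      DerV Γ t σ n → DerV Δ u (Ty.mult M) m → Multiset.ofList M = Γ 0 →
      DerV (Ctx.tail Γ + Δ) (Lm.esub t u) σ (n + m + 1)
  | abs {t : Lm} (prs : List (Ctx × List Ty × Ty × ℕ)) :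
      (∀ p ∈ prs, DerV p.1 t p.2.2.1 p.2.2.2) →
      (∀ p ∈ prs, Multiset.ofList p.2.1 = p.1 0) →
      DerV ((prs.map (fun p => Ctx.tail p.1)).sum) (Lm.lam t)
           (Ty.mult (prs.map (fun p => Ty.arr p.2.1 p.2.2.1)))
           ((prs.map (·.2.2.2)).sum + prs.length)
  | app {Γ Δ : Ctx} {t u : Lm} {M : List Ty} {τ : Ty} {n m : ℕ} :
      DerV Γ t (Ty.mult [Ty.arr M τ]) n → DerV Δ u (Ty.mult M) m →
      DerV (Γ + Δ) (Lm.app t u) τ (n + m + 1)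

/-! ## Auxiliary development for the uniqueness of reduction lengths -/

namespace UL

open Tm

/-! ### Substitution calculus -/

theorem liftR_comp (f g : ℕ → ℕ) : liftR (f ∘ g) = liftR f ∘ liftR g := by
  funext k; cases k <;> rfl

theorem rename_rename (f g : ℕ → ℕ) (t : Tm) :
    rename f (rename g t) = rename (f ∘ g) t := by
  induction t generalizing f g <;> simp [rename, liftR_comp, *]

theorem liftS_liftR (σ : ℕ → Tm) (f : ℕ → ℕ) :
    liftS σ ∘ liftR f = liftS (σ ∘ f) := by
  funext k; cases k <;> rfl

theorem subst_rename (σ : ℕ → Tm) (f : ℕ → ℕ) (t : Tm) :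
    subst σ (rename f t) = subst (σ ∘ f) t := by
  induction t generalizing σ f <;> simp [rename, subst, liftS_liftR, *]

theorem rename_liftS (f : ℕ → ℕ) (σ : ℕ → Tm) :
    rename (liftR f) ∘ liftS σ = liftS (rename f ∘ σ) := by
  funext k; cases k with
  | zero => rfl
  | succ k =>
    show rename (liftR f) (rename (· + 1) (σ k)) = rename (· + 1) (rename f (σ k))
    rw [rename_rename, rename_rename]; rfl

theorem rename_subst (f : ℕ → ℕ) (σ : ℕ → Tm) (t : Tm) :
    rename f (subst σ t) = subst (rename f ∘ σ) t := by
  induction t generalizing σ f <;> simp [rename, subst, rename_liftS, *]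

theorem subst_liftS (σ τ : ℕ → Tm) :
    subst (liftS σ) ∘ liftS τ = liftS (subst σ ∘ τ) := by
  funext k; cases k with
  | zero => rfl
  | succ k =>
    show subst (liftS σ) (rename (· + 1) (τ k)) = rename (· + 1) (subst σ (τ k))
    rw [subst_rename, rename_subst]; rfl

theorem subst_subst (σ τ : ℕ → Tm) (t : Tm) :
    subst σ (subst τ t) = subst (subst σ ∘ τ) t := by
  induction t generalizing σ τ <;> simp [subst, subst_liftS, *]

theorem subst_varf (f : ℕ → ℕ) (t : Tm) :
    subst (fun k => var (f k)) t = rename f t := by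
  have key : ∀ f, liftS (fun k => var (f k)) = fun k => var (liftR f k) := by
    intro f; funext k; cases k <;> rfl
  induction t generalizing f <;> simp [subst, rename, key, *]

theorem rename_id (t : Tm) : rename id t = t := by
  have key : liftR id = id := by funext k; cases k <;> rfl
  induction t <;> simp [rename, key, *]

theorem rename_add_zero (t : Tm) : rename (· + 0) t = t := by
  have : (fun k : ℕ => k + 0) = id := by funext k; rfl
  rw [this, rename_id]

/-! ### Iterated lifts and plugging -/

/-- iterated `liftR` -/
def liftRN : ℕ → (ℕ → ℕ) → ℕ → ℕ
  | 0, f => f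
  | n + 1, f => liftR (liftRN n f)

/-- iterated `liftS` -/
def liftSN : ℕ → (ℕ → Tm) → ℕ → Tm
  | 0, σ => σ
  | n + 1, σ => liftS (liftSN n σ)

theorem liftRN_liftR (n : ℕ) (f : ℕ → ℕ) :
    liftRN n (liftR f) = liftR (liftRN n f) := by
  induction n with
  | zero => rfl
  | succ n ih => show liftR _ = _ ; rw [ih]; rfl

theorem liftSN_liftS (n : ℕ) (σ : ℕ → Tm) :
    liftSN n (liftS σ) = liftS (liftSN n σ) := by
  induction n with
  | zero => rfl
  | succ n ih => show liftS _ = _ ; rw [ih]; rfl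

/-- renaming of the entries of a list context -/
def renameL (f : ℕ → ℕ) : List Tm → List Tm
  | [] => []
  | e :: L => rename f e :: renameL (liftR f) L

/-- substitution on the entries of a list context -/
def substL (σ : ℕ → Tm) : List Tm → List Tm
  | [] => []
  | e :: L => subst σ e :: substL (liftS σ) L

@[simp] theorem renameL_length (f : ℕ → ℕ) (L : List Tm) :
    (renameL f L).length = L.length := by
  induction L generalizing f <;> simp [renameL, *]

@[simp] theorem substL_length (σ : ℕ → Tm) (L : List Tm) :
    (substL σ L).length = L.length := by
  induction L generalizing σ <;> simp [substL, *]

theorem rename_plug (f : ℕ → ℕ) (L : List Tm) (s : Tm) :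
    rename f (plug L s) = plug (renameL f L) (rename (liftRN L.length f) s) := by
  induction L generalizing f with
  | nil => rfl
  | cons e L ih =>
    show esub (rename (liftR f) (plug L s)) (rename f e) = _
    rw [ih, liftRN_liftR]; rfl

theorem subst_plug (σ : ℕ → Tm) (L : List Tm) (s : Tm) :
    subst σ (plug L s) = plug (substL σ L) (subst (liftSN L.length σ) s) := by
  induction L generalizing σ with
  | nil => rfl
  | cons e L ih =>
    show esub (subst (liftS σ) (plug L s)) (subst σ e) = _
    rw [ih, liftSN_liftS]; rfl

theorem plug_append (L₁ L₂ : List Tm) (s : Tm) :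
    plug (L₁ ++ L₂) s = plug L₁ (plug L₂ s) := by
  induction L₁ with
  | nil => rfl
  | cons e L ih => exact congrArg (fun x => Tm.esub x e) ih

theorem liftRN_add (n : ℕ) (f : ℕ → ℕ) (k : ℕ) :
    liftRN n f (k + n) = f k + n := by
  induction n with
  | zero => rfl
  | succ n ih => show liftR (liftRN n f) ((k + n) + 1) = (f k + n) + 1
                 simp [liftR, ih]

theorem liftSN_add (n : ℕ) (σ : ℕ → Tm) (k : ℕ) :
    liftSN n σ (k + n) = rename (· + n) (σ k) := by
  induction n with
  | zero => exact (rename_add_zero _).symm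
  | succ n ih =>
    show liftS (liftSN n σ) ((k + n) + 1) = _
    show rename (· + 1) (liftSN n σ (k + n)) = _
    rw [ih, rename_rename]; rfl

/-! ### Key commutation identities -/

theorem rename_substIn (f : ℕ → ℕ) (n : ℕ) (u t : Tm) :
    rename (liftRN n f) (substIn n u t)
      = substIn n (rename (liftRN n f) u) (rename (liftR f) t) := by
  unfold substIn
  rw [rename_subst, subst_rename]
  congr 1; funext k
  cases k with
  | zero => rfl
  | succ k =>
    show rename (liftRN n f) (var (k + n)) = var (f k + n)
    simp [rename, liftRN_add]

theorem subst_substIn (σ : ℕ → Tm) (n : ℕ) (u t : Tm) :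
    subst (liftSN n σ) (substIn n u t)
      = substIn n (subst (liftSN n σ) u) (subst (liftS σ) t) := by
  unfold substIn
  rw [subst_subst, subst_subst]
  congr 1; funext k
  cases k with
  | zero => rfl
  | succ k =>
    show subst (liftSN n σ) (var (k + n)) = subst _ (rename (· + 1) (σ k))
    show liftSN n σ (k + n) = _
    rw [liftSN_add, subst_rename, ← subst_varf (fun j => j + n) (σ k)]
    exact congrArg (fun τ => subst τ (σ k)) (funext fun j => rfl)

/-! ### Stability of steps under renaming, substitution and contexts -/

theorem root_rename {r : Rule} {t t' : Tm} (h : Root r t t') (f : ℕ → ℕ) :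
    Root r (rename f t) (rename f t') := by
  cases h with
  | dB L b u =>
    have h1 : rename f (app (plug L (lam b)) u)
        = app (plug (renameL f L) (lam (rename (liftR (liftRN L.length f)) b)))
            (rename f u) := by
      simp [rename, rename_plug]
    have h2 : rename f (plug L (esub b (rename (· + L.length) u)))
        = plug (renameL f L)
            (esub (rename (liftR (liftRN L.length f)) b)
              (rename (· + L.length) (rename f u))) := by
      rw [rename_plug]
      simp only [rename]
      rw [rename_rename, rename_rename]
      exact congrArg (fun x => plug (renameL f L) (esub (rename (liftR (liftRN L.length f)) b) x))
        (congrArg (fun g => rename g u) (funext fun k => liftRN_add L.length f k))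
    rw [h1, h2]
    have := Root.dB (renameL f L) (rename (liftR (liftRN L.length f)) b) (rename f u)
    simpa using this
  | sb L b u =>
    have h1 : rename f (esub b (plug L (bang u)))
        = esub (rename (liftR f) b)
            (plug (renameL f L) (bang (rename (liftRN L.length f) u))) := by
      simp [rename, rename_plug]
    have h2 : rename f (plug L (substIn L.length u b))
        = plug (renameL f L)
            (substIn L.length (rename (liftRN L.length f) u) (rename (liftR f) b)) := by
      rw [rename_plug, rename_substIn]
    rw [h1, h2]
    have := Root.sb (renameL f L) (rename (liftR f) b) (rename (liftRN L.length f) u)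
    simpa using this
  | db L b =>
    have h1 : rename f (der (plug L (bang b)))
        = der (plug (renameL f L) (bang (rename (liftRN L.length f) b))) := by
      simp [rename, rename_plug]
    have h2 : rename f (plug L b)
        = plug (renameL f L) (rename (liftRN L.length f) b) := by
      rw [rename_plug]
    rw [h1, h2]
    exact Root.db (renameL f L) (rename (liftRN L.length f) b)

theorem root_subst {r : Rule} {t t' : Tm} (h : Root r t t') (σ : ℕ → Tm) :
    Root r (subst σ t) (subst σ t') := by
  cases h with
  | dB L b u =>
    have h1 : subst σ (app (plug L (lam b)) u)
        = app (plug (substL σ L) (lam (subst (liftS (liftSN L.length σ)) b)))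
            (subst σ u) := by
      simp [subst, subst_plug]
    have h2 : subst σ (plug L (esub b (rename (· + L.length) u)))
        = plug (substL σ L)
            (esub (subst (liftS (liftSN L.length σ)) b)
              (rename (· + L.length) (subst σ u))) := by
      rw [subst_plug]
      simp only [subst]
      rw [subst_rename, rename_subst]
      exact congrArg (fun x => plug (substL σ L) (esub (subst (liftS (liftSN L.length σ)) b) x))
        (congrArg (fun g => subst g u) (funext fun k => liftSN_add L.length σ k))
    rw [h1, h2]
    have := Root.dB (substL σ L) (subst (liftS (liftSN L.length σ)) b) (subst σ u)
    simpa using this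
  | sb L b u =>
    have h1 : subst σ (esub b (plug L (bang u)))
        = esub (subst (liftS σ) b)
            (plug (substL σ L) (bang (subst (liftSN L.length σ) u))) := by
      simp [subst, subst_plug]
    have h2 : subst σ (plug L (substIn L.length u b))
        = plug (substL σ L)
            (substIn L.length (subst (liftSN L.length σ) u) (subst (liftS σ) b)) := by
      rw [subst_plug, subst_substIn]
    rw [h1, h2]
    have := Root.sb (substL σ L) (subst (liftS σ) b) (subst (liftSN L.length σ) u)
    simpa using this
  | db L b =>
    have h1 : subst σ (der (plug L (bang b)))
        = der (plug (substL σ L) (bang (subst (liftSN L.length σ) b))) := by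
      simp [subst, subst_plug]
    have h2 : subst σ (plug L b)
        = plug (substL σ L) (subst (liftSN L.length σ) b) := by
      rw [subst_plug]
    rw [h1, h2]
    exact Root.db (substL σ L) (subst (liftSN L.length σ) b)

theorem step_rename {r : Rule} {t t' : Tm} (h : Step r t t') (f : ℕ → ℕ) :
    Step r (rename f t) (rename f t') := by
  induction h generalizing f with
  | root hr => exact Step.root (root_rename hr f)
  | appL u _ ih => exact Step.appL _ (ih f)
  | appR t _ ih => exact Step.appR _ (ih f)
  | lam _ ih => exact Step.lam (ih (liftR f))
  | der _ ih => exact Step.der (ih f)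
  | esubL u _ ih => exact Step.esubL _ (ih (liftR f))
  | esubR t _ ih => exact Step.esubR _ (ih f)

theorem step_subst {r : Rule} {t t' : Tm} (h : Step r t t') (σ : ℕ → Tm) :
    Step r (subst σ t) (subst σ t') := by
  induction h generalizing σ with
  | root hr => exact Step.root (root_subst hr σ)
  | appL u _ ih => exact Step.appL _ (ih σ)
  | appR t _ ih => exact Step.appR _ (ih σ)
  | lam _ ih => exact Step.lam (ih (liftS σ))
  | der _ ih => exact Step.der (ih σ)
  | esubL u _ ih => exact Step.esubL _ (ih (liftS σ))
  | esubR t _ ih => exact Step.esubR _ (ih σ)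

theorem step_plug {r : Rule} {s s' : Tm} (L : List Tm) (h : Step r s s') :
    Step r (plug L s) (plug L s') := by
  induction L with
  | nil => exact h
  | cons e L ih => exact Step.esubL e ih

theorem step_plug_entry {r : Rule} {e e' : Tm} (L₁ L₂ : List Tm) (s : Tm)
    (h : Step r e e') :
    Step r (plug (L₁ ++ e :: L₂) s) (plug (L₁ ++ e' :: L₂) s) := by
  induction L₁ with
  | nil => exact Step.esubR _ h
  | cons a L₁ ih => exact Step.esubL a ih

/-! ### Inversion lemmas -/

theorem no_step_bang {r : Rule} {t w : Tm} (h : Step r (bang t) w) : False := by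
  cases h with
  | root hr => cases hr

theorem step_lam_inv {r : Rule} {t w : Tm} (h : Step r (lam t) w) :
    ∃ t', w = lam t' ∧ Step r t t' := by
  cases h with
  | root hr => cases hr
  | lam hs => exact ⟨_, rfl, hs⟩

theorem plug_lam_inj {L L' : List Tm} {a a' : Tm}
    (h : plug L (lam a) = plug L' (lam a')) : L = L' ∧ a = a' := by
  induction L generalizing L' with
  | nil =>
    cases L' with
    | nil => simpa [plug] using h
    | cons e L' => simp [plug] at h
  | cons e L ih =>
    cases L' with
    | nil => simp [plug] at h
    | cons e' L' =>
      simp only [plug, esub.injEq] at h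
      obtain ⟨h1, h2⟩ := h
      obtain ⟨rfl, rfl⟩ := ih h1
      exact ⟨by rw [h2], rfl⟩

theorem plug_bang_inj {L L' : List Tm} {a a' : Tm}
    (h : plug L (bang a) = plug L' (bang a')) : L = L' ∧ a = a' := by
  induction L generalizing L' with
  | nil =>
    cases L' with
    | nil => simpa [plug] using h
    | cons e L' => simp [plug] at h
  | cons e L ih =>
    cases L' with
    | nil => simp [plug] at h
    | cons e' L' =>
      simp only [plug, esub.injEq] at h
      obtain ⟨h1, h2⟩ := h
      obtain ⟨rfl, rfl⟩ := ih h1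
      exact ⟨by rw [h2], rfl⟩

theorem plug_step_inv {r : Rule} {L : List Tm} {s w : Tm}
    (h : Step r (plug L s) w) :
    (∃ s', Step r s s' ∧ w = plug L s') ∨
    (∃ L₁ e e' L₂, L = L₁ ++ e :: L₂ ∧ Step r e e' ∧
       w = plug (L₁ ++ e' :: L₂) s) ∨
    (r = .sb ∧ ∃ L₁ L₂ L₃ u, L = L₁ ++ (plug L₃ (bang u)) :: L₂ ∧
       w = plug L₁ (plug L₃ (substIn L₃.length u (plug L₂ s)))) := by
  induction L generalizing w with
  | nil => exact Or.inl ⟨w, h, rfl⟩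
  | cons e L ih =>
    cases h with
    | root hr =>
      cases hr with
      | sb L₃ b u =>
        right; right
        exact ⟨rfl, [], L, L₃, u, rfl, rfl⟩
    | esubL u hs =>
      rcases ih hs with ⟨s', hs', rfl⟩ | ⟨L₁, a, a', L₂, rfl, ha, rfl⟩ |
        ⟨rfl, L₁, L₂, L₃, u₀, rfl, rfl⟩
      · exact Or.inl ⟨s', hs', rfl⟩
      · exact Or.inr (Or.inl ⟨e :: L₁, a, a', L₂, rfl, ha, rfl⟩)
      · exact Or.inr (Or.inr ⟨rfl, e :: L₁, L₂, L₃, u₀, rfl, rfl⟩)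
    | esubR t hs =>
      exact Or.inr (Or.inl ⟨[], e, _, L, rfl, hs, rfl⟩)

/-! ### Critical pair identities -/

/-- the substitution underlying `substIn` -/
def sig (n : ℕ) (u : Tm) : ℕ → Tm := fun k => match k with
  | 0 => u
  | k + 1 => var (k + n)

theorem substIn_def (n : ℕ) (u t : Tm) : substIn n u t = subst (sig n u) t := rfl

theorem keyvar (n₁ n₂ n₃ : ℕ) (u₀ : Tm) (k : ℕ) :
    liftSN n₂ (sig n₃ u₀) (k + (n₁ + 1 + n₂)) = var (k + (n₁ + n₃ + n₂)) := by
  have h : k + (n₁ + 1 + n₂) = (k + n₁ + 1) + n₂ := by omega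
  rw [h, liftSN_add]
  show rename (· + n₂) (var (k + n₁ + n₃)) = _
  show var (k + n₁ + n₃ + n₂) = var (k + (n₁ + n₃ + n₂))
  exact congrArg var (by omega)

theorem keyE1 (n₁ n₂ n₃ : ℕ) (u₀ u : Tm) :
    subst (liftSN n₂ (sig n₃ u₀)) (rename (· + (n₁ + 1 + n₂)) u)
      = rename (· + (n₁ + n₃ + n₂)) u := by
  rw [subst_rename, ← subst_varf (· + (n₁ + n₃ + n₂)) u]
  exact congrArg (fun σ => subst σ u) (funext fun k => keyvar n₁ n₂ n₃ u₀ k)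

theorem keyE2 (n₁ n₂ n₃ : ℕ) (u₀ b a : Tm) :
    subst (liftSN n₂ (sig n₃ u₀)) (substIn (n₁ + 1 + n₂) b a)
      = substIn (n₁ + n₃ + n₂) (subst (liftSN n₂ (sig n₃ u₀)) b) a := by
  rw [substIn_def, substIn_def, subst_subst]
  refine congrArg (fun σ => subst σ a) (funext fun k => ?_)
  cases k with
  | zero => rfl
  | succ k =>
    show subst (liftSN n₂ (sig n₃ u₀)) (var (k + (n₁ + 1 + n₂)))
      = var (k + (n₁ + n₃ + n₂))
    exact keyvar n₁ n₂ n₃ u₀ k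

theorem spine_sb_eq (L₁ L₂ L₃ : List Tm) (u₀ s : Tm) :
    plug L₁ (plug L₃ (substIn L₃.length u₀ (plug L₂ s)))
      = plug (L₁ ++ L₃ ++ substL (sig L₃.length u₀) L₂)
          (subst (liftSN L₂.length (sig L₃.length u₀)) s) := by
  rw [substIn_def, subst_plug, List.append_assoc, plug_append, plug_append]

theorem spine_sb (L₁ L₂ L₃ : List Tm) (u₀ s : Tm) :
    Step .sb (plug (L₁ ++ (plug L₃ (bang u₀)) :: L₂) s)
      (plug (L₁ ++ L₃ ++ substL (sig L₃.length u₀) L₂)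
        (subst (liftSN L₂.length (sig L₃.length u₀)) s)) := by
  have h1 : plug (L₁ ++ (plug L₃ (bang u₀)) :: L₂) s
      = plug L₁ (esub (plug L₂ s) (plug L₃ (bang u₀))) := by
    rw [plug_append]; rfl
  rw [h1, ← spine_sb_eq]
  exact step_plug L₁ (Step.root (Root.sb L₃ (plug L₂ s) u₀))

theorem len_mid (L₁ L₂ : List Tm) (e : Tm) :
    (L₁ ++ e :: L₂).length = L₁.length + 1 + L₂.length := by
  simp only [List.length_append, List.length_cons]; omega

theorem len_cat (L₁ L₂ L₃ : List Tm) (u₀ : Tm) :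
    (L₁ ++ L₃ ++ substL (sig L₃.length u₀) L₂).length
      = L₁.length + L₃.length + L₂.length := by
  simp only [List.length_append, substL_length]

/-! ### Inversion of root steps -/

theorem root_app_inv {r : Rule} {x u w : Tm} (h : Root r (app x u) w) :
    ∃ L b, x = plug L (lam b) ∧ r = .dB ∧
      w = plug L (esub b (rename (· + L.length) u)) := by
  cases h with
  | dB L b u => exact ⟨L, b, rfl, rfl, rfl⟩

theorem root_esub_inv {r : Rule} {a x w : Tm} (h : Root r (esub a x) w) :
    ∃ L b, x = plug L (bang b) ∧ r = .sb ∧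
      w = plug L (substIn L.length b a) := by
  cases h with
  | sb L b u => exact ⟨L, u, rfl, rfl, rfl⟩

theorem root_der_inv {r : Rule} {x w : Tm} (h : Root r (der x) w) :
    ∃ L b, x = plug L (bang b) ∧ r = .db ∧ w = plug L b := by
  cases h with
  | db L b => exact ⟨L, b, rfl, rfl, rfl⟩

/-! ### Joining a root step with an arbitrary coinitial step -/

theorem root_step_join {r₀ r : Rule} {t z w : Tm}
    (h₁ : Root r₀ t z) (h₂ : Step r t w) :
    (r = r₀ ∧ w = z) ∨ ∃ v, Step r z v ∧ Step r₀ w v := by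
  cases h₁ with
  | dB L b u =>
    cases h₂ with
    | root hr =>
      obtain ⟨L', b', hx, rfl, rfl⟩ := root_app_inv hr
      obtain ⟨rfl, rfl⟩ := plug_lam_inj hx.symm
      exact Or.inl ⟨rfl, rfl⟩
    | appR _ hs =>
      rename_i u'
      refine Or.inr ⟨plug L (esub b (rename (· + L.length) u')), ?_, ?_⟩
      · exact step_plug L (Step.esubR b (step_rename hs _))
      · exact Step.root (Root.dB L b u')
    | appL _ hs =>
      rcases plug_step_inv hs with ⟨s', hs', rfl⟩ | ⟨L₁, a, a', L₂, rfl, ha, rfl⟩ |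
        ⟨rfl, L₁, L₂, L₃, u₀, rfl, rfl⟩
      · obtain ⟨b', rfl, hb⟩ := step_lam_inv hs'
        refine Or.inr ⟨plug L (esub b' (rename (· + L.length) u)), ?_, ?_⟩
        · exact step_plug L (Step.esubL _ hb)
        · exact Step.root (Root.dB L b' u)
      · refine Or.inr ⟨plug (L₁ ++ a' :: L₂) (esub b
            (rename (· + (L₁ ++ a :: L₂).length) u)), ?_, ?_⟩
        · exact step_plug_entry L₁ L₂ _ ha
        · have e1 : (L₁ ++ a' :: L₂).length = (L₁ ++ a :: L₂).length := by
            simp [len_mid]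
          have hstep := Step.root (Root.dB (L₁ ++ a' :: L₂) b u)
          rw [e1] at hstep
          exact hstep
      · -- inner sb step in the list context of a dB redex
        set τ := sig L₃.length u₀ with hτ
        set M := (L₁ ++ L₃ ++ substL τ L₂).length with hM
        refine Or.inr ⟨plug (L₁ ++ L₃ ++ substL τ L₂)
          (esub (subst (liftS (liftSN L₂.length τ)) b) (rename (· + M) u)), ?_, ?_⟩
        · have hstep := spine_sb L₁ L₂ L₃ u₀
            (esub b (rename (· + (L₁ ++ (plug L₃ (bang u₀)) :: L₂).length) u))
          have heq : subst (liftSN L₂.length τ)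
              (esub b (rename (· + (L₁ ++ (plug L₃ (bang u₀)) :: L₂).length) u))
              = esub (subst (liftS (liftSN L₂.length τ)) b) (rename (· + M) u) := by
            show Tm.esub _ _ = _
            rw [len_mid, keyE1 L₁.length L₂.length L₃.length u₀ u]
            rw [hM, len_cat]
          rw [heq] at hstep
          exact hstep
        · have hw : app (plug L₁ (plug L₃ (substIn L₃.length u₀ (plug L₂ (lam b))))) u
              = app (plug (L₁ ++ L₃ ++ substL τ L₂)
                  (lam (subst (liftS (liftSN L₂.length τ)) b))) u := by
            rw [spine_sb_eq]; rfl
          rw [hw]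
          exact Step.root (Root.dB (L₁ ++ L₃ ++ substL τ L₂)
            (subst (liftS (liftSN L₂.length τ)) b) u)
  | sb L b u =>
    cases h₂ with
    | root hr =>
      obtain ⟨L', b', hx, rfl, rfl⟩ := root_esub_inv hr
      obtain ⟨rfl, rfl⟩ := plug_bang_inj hx.symm
      exact Or.inl ⟨rfl, rfl⟩
    | esubL _ hs =>
      rename_i a'
      refine Or.inr ⟨plug L (substIn L.length u a'), ?_, ?_⟩
      · exact step_plug L (step_subst hs (sig L.length u))
      · exact Step.root (Root.sb L a' u)
    | esubR _ hs =>
      rcases plug_step_inv hs with ⟨s', hs', rfl⟩ | ⟨L₁, a, a', L₂, rfl, ha, rfl⟩ |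
        ⟨rfl, L₁, L₂, L₃, u₀, rfl, rfl⟩
      · exact absurd hs' no_step_bang
      · refine Or.inr ⟨plug (L₁ ++ a' :: L₂) (substIn (L₁ ++ a :: L₂).length u b),
          ?_, ?_⟩
        · exact step_plug_entry L₁ L₂ _ ha
        · have e1 : (L₁ ++ a' :: L₂).length = (L₁ ++ a :: L₂).length := by
            simp [len_mid]
          have hstep := Step.root (Root.sb (L₁ ++ a' :: L₂) b u)
          rw [e1] at hstep
          exact hstep
      · set τ := sig L₃.length u₀ with hτ
        set M := (L₁ ++ L₃ ++ substL τ L₂).length with hM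
        refine Or.inr ⟨plug (L₁ ++ L₃ ++ substL τ L₂)
          (substIn M (subst (liftSN L₂.length τ) u) b), ?_, ?_⟩
        · have hstep := spine_sb L₁ L₂ L₃ u₀
            (substIn (L₁ ++ (plug L₃ (bang u₀)) :: L₂).length u b)
          have heq : subst (liftSN L₂.length τ)
              (substIn (L₁ ++ (plug L₃ (bang u₀)) :: L₂).length u b)
              = substIn M (subst (liftSN L₂.length τ) u) b := by
            rw [len_mid, keyE2 L₁.length L₂.length L₃.length u₀ u b]
            rw [hM, len_cat]
          rw [heq] at hstep
          exact hstep
        · have hw : esub b (plug L₁ (plug L₃ (substIn L₃.length u₀ (plug L₂ (bang u)))))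
              = esub b (plug (L₁ ++ L₃ ++ substL τ L₂)
                  (bang (subst (liftSN L₂.length τ) u))) := by
            rw [spine_sb_eq]; rfl
          rw [hw]
          exact Step.root (Root.sb (L₁ ++ L₃ ++ substL τ L₂) b
            (subst (liftSN L₂.length τ) u))
  | db L b =>
    cases h₂ with
    | root hr =>
      obtain ⟨L', b', hx, rfl, rfl⟩ := root_der_inv hr
      obtain ⟨rfl, rfl⟩ := plug_bang_inj hx.symm
      exact Or.inl ⟨rfl, rfl⟩
    | der hs =>
      rcases plug_step_inv hs with ⟨s', hs', rfl⟩ | ⟨L₁, a, a', L₂, rfl, ha, rfl⟩ |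
        ⟨rfl, L₁, L₂, L₃, u₀, rfl, rfl⟩
      · exact absurd hs' no_step_bang
      · refine Or.inr ⟨plug (L₁ ++ a' :: L₂) b, ?_, ?_⟩
        · exact step_plug_entry L₁ L₂ _ ha
        · exact Step.root (Root.db (L₁ ++ a' :: L₂) b)
      · set τ := sig L₃.length u₀ with hτ
        refine Or.inr ⟨plug (L₁ ++ L₃ ++ substL τ L₂)
          (subst (liftSN L₂.length τ) b), ?_, ?_⟩
        · exact spine_sb L₁ L₂ L₃ u₀ b
        · have hw : der (plug L₁ (plug L₃ (substIn L₃.length u₀ (plug L₂ (bang b)))))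
              = der (plug (L₁ ++ L₃ ++ substL τ L₂)
                  (bang (subst (liftSN L₂.length τ) b))) := by
            rw [spine_sb_eq]; rfl
          rw [hw]
          exact Step.root (Root.db (L₁ ++ L₃ ++ substL τ L₂)
            (subst (liftSN L₂.length τ) b))

/-! ### The labelled diamond property -/

theorem diamond {r₁ r₂ : Rule} {t t₁ : Tm} (h₁ : Step r₁ t t₁) :
    ∀ {t₂ : Tm}, Step r₂ t t₂ →
      (r₁ = r₂ ∧ t₁ = t₂) ∨ ∃ u, Step r₂ t₁ u ∧ Step r₁ t₂ u := by
  induction h₁ with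
  | root hr =>
    intro t₂ h₂
    rcases root_step_join hr h₂ with ⟨rfl, rfl⟩ | ⟨v, hv₁, hv₂⟩
    · exact Or.inl ⟨rfl, rfl⟩
    · exact Or.inr ⟨v, hv₁, hv₂⟩
  | appL u hs ih =>
    intro t₂ h₂
    cases h₂ with
    | root hr =>
      rcases root_step_join hr (Step.appL u hs) with ⟨rfl, rfl⟩ | ⟨v, hv₁, hv₂⟩
      · exact Or.inl ⟨rfl, rfl⟩
      · exact Or.inr ⟨v, hv₂, hv₁⟩
    | appL _ hs₂ =>
      rcases ih hs₂ with ⟨rfl, rfl⟩ | ⟨v, h1, h2⟩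
      · exact Or.inl ⟨rfl, rfl⟩
      · exact Or.inr ⟨Tm.app v u, Step.appL u h1, Step.appL u h2⟩
    | appR _ hs₂ =>
      exact Or.inr ⟨_, Step.appR _ hs₂, Step.appL _ hs⟩
  | appR a hs ih =>
    intro t₂ h₂
    cases h₂ with
    | root hr =>
      rcases root_step_join hr (Step.appR a hs) with ⟨rfl, rfl⟩ | ⟨v, hv₁, hv₂⟩
      · exact Or.inl ⟨rfl, rfl⟩
      · exact Or.inr ⟨v, hv₂, hv₁⟩
    | appL _ hs₂ =>
      exact Or.inr ⟨_, Step.appL _ hs₂, Step.appR _ hs⟩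
    | appR _ hs₂ =>
      rcases ih hs₂ with ⟨rfl, rfl⟩ | ⟨v, h1, h2⟩
      · exact Or.inl ⟨rfl, rfl⟩
      · exact Or.inr ⟨Tm.app a v, Step.appR a h1, Step.appR a h2⟩
  | lam hs ih =>
    intro t₂ h₂
    cases h₂ with
    | root hr => cases hr
    | lam hs₂ =>
      rcases ih hs₂ with ⟨rfl, rfl⟩ | ⟨v, h1, h2⟩
      · exact Or.inl ⟨rfl, rfl⟩
      · exact Or.inr ⟨Tm.lam v, Step.lam h1, Step.lam h2⟩
  | der hs ih =>
    intro t₂ h₂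
    cases h₂ with
    | root hr =>
      rcases root_step_join hr (Step.der hs) with ⟨rfl, rfl⟩ | ⟨v, hv₁, hv₂⟩
      · exact Or.inl ⟨rfl, rfl⟩
      · exact Or.inr ⟨v, hv₂, hv₁⟩
    | der hs₂ =>
      rcases ih hs₂ with ⟨rfl, rfl⟩ | ⟨v, h1, h2⟩
      · exact Or.inl ⟨rfl, rfl⟩
      · exact Or.inr ⟨Tm.der v, Step.der h1, Step.der h2⟩
  | esubL u hs ih =>
    intro t₂ h₂
    cases h₂ with
    | root hr =>
      rcases root_step_join hr (Step.esubL u hs) with ⟨rfl, rfl⟩ | ⟨v, hv₁, hv₂⟩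
      · exact Or.inl ⟨rfl, rfl⟩
      · exact Or.inr ⟨v, hv₂, hv₁⟩
    | esubL _ hs₂ =>
      rcases ih hs₂ with ⟨rfl, rfl⟩ | ⟨v, h1, h2⟩
      · exact Or.inl ⟨rfl, rfl⟩
      · exact Or.inr ⟨Tm.esub v u, Step.esubL u h1, Step.esubL u h2⟩
    | esubR _ hs₂ =>
      exact Or.inr ⟨_, Step.esubR _ hs₂, Step.esubL _ hs⟩
  | esubR a hs ih =>
    intro t₂ h₂
    cases h₂ with
    | root hr =>
      rcases root_step_join hr (Step.esubR a hs) with ⟨rfl, rfl⟩ | ⟨v, hv₁, hv₂⟩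
      · exact Or.inl ⟨rfl, rfl⟩
      · exact Or.inr ⟨v, hv₂, hv₁⟩
    | esubL _ hs₂ =>
      exact Or.inr ⟨_, Step.esubL _ hs₂, Step.esubR _ hs⟩
    | esubR _ hs₂ =>
      rcases ih hs₂ with ⟨rfl, rfl⟩ | ⟨v, h1, h2⟩
      · exact Or.inl ⟨rfl, rfl⟩
      · exact Or.inr ⟨Tm.esub a v, Step.esubR a h1, Step.esubR a h2⟩

/-! ### Random descent: uniqueness of counted reductions -/

/-- the contribution of a rule to the step counters -/
def delta : Rule → ℕ × ℕ
  | .dB => (1, 0)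
  | .sb => (0, 1)
  | .db => (0, 1)

theorem step_redcnt {t p : Tm} {c : ℕ × ℕ} (h : RedCnt t c p)
    (hp : ∀ u, ¬ StepW p u) :
    ∀ {r : Rule} {t₁ : Tm}, Step r t t₁ →
      ∃ c' p', RedCnt t₁ c' p' ∧ (∀ u, ¬ StepW p' u) ∧ c = c' + delta r := by
  induction h with
  | refl t =>
    intro r t₁ hs
    exact absurd ⟨r, hs⟩ (hp t₁)
  | @db t t₃ p b e hstep htail ih =>
    intro r t₁ hs
    rcases diamond hs hstep with ⟨rfl, rfl⟩ | ⟨v, h1, h2⟩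
    · refine ⟨(b, e), p, htail, hp, ?_⟩
      show (b + 1, e) = (b, e) + (1, 0)
      simp [Prod.ext_iff]
    · obtain ⟨⟨b'', e''⟩, p', hred, hn', hceq⟩ := ih hp h2
      refine ⟨(b'' + 1, e''), p', RedCnt.db h1 hred, hn', ?_⟩
      cases r <;>
        (simp only [delta, Prod.mk_add_mk, Prod.mk.injEq] at hceq ⊢; omega)
  | @ex t t₃ p b e hor htail ih =>
    intro r t₁ hs
    obtain ⟨r₃, h₃, hd₃, hmem⟩ : ∃ r₃, Step r₃ t t₃ ∧ delta r₃ = (0, 1) ∧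
        (r₃ = .sb ∨ r₃ = .db) := by
      rcases hor with h | h
      · exact ⟨.sb, h, rfl, Or.inl rfl⟩
      · exact ⟨.db, h, rfl, Or.inr rfl⟩
    rcases diamond hs h₃ with ⟨rfl, rfl⟩ | ⟨v, h1, h2⟩
    · refine ⟨(b, e), p, htail, hp, ?_⟩
      show (b, e + 1) = (b, e) + delta r
      rw [hd₃]
      simp [Prod.ext_iff]
    · obtain ⟨⟨b'', e''⟩, p', hred, hn', hceq⟩ := ih hp h2
      have hor' : Step .sb t₁ v ∨ Step .db t₁ v := by
        rcases hmem with rfl | rfl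
        · exact Or.inl h1
        · exact Or.inr h1
      refine ⟨(b'', e'' + 1), p', RedCnt.ex hor' hred, hn', ?_⟩
      cases r <;>
        (simp only [delta, Prod.mk_add_mk, Prod.mk.injEq] at hceq ⊢; omega)

theorem redcnt_unique {t p₁ : Tm} {c₁ : ℕ × ℕ} (h₁ : RedCnt t c₁ p₁) :
    (∀ u, ¬ StepW p₁ u) → ∀ {c₂ : ℕ × ℕ} {p₂ : Tm}, RedCnt t c₂ p₂ →
      (∀ u, ¬ StepW p₂ u) → c₁ = c₂ := by
  induction h₁ with
  | refl t =>
    intro n₁ c₂ p₂ h₂ n₂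
    cases h₂ with
    | refl => rfl
    | db hs _ => exact absurd ⟨_, hs⟩ (n₁ _)
    | ex hs _ =>
      rcases hs with hs | hs
      · exact absurd ⟨_, hs⟩ (n₁ _)
      · exact absurd ⟨_, hs⟩ (n₁ _)
  | @db t t₃ p₁ b e hstep htail ih =>
    intro n₁ c₂ p₂ h₂ n₂
    obtain ⟨c', p', hred, hn', hc⟩ := step_redcnt h₂ n₂ hstep
    have heq := ih n₁ hred hn'
    rw [hc, ← heq]
    show (b + 1, e) = (b, e) + (1, 0)
    simp [Prod.ext_iff]
  | @ex t t₃ p₁ b e hor htail ih =>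
    intro n₁ c₂ p₂ h₂ n₂
    obtain ⟨r₃, h₃, hd₃⟩ : ∃ r₃, Step r₃ t t₃ ∧ delta r₃ = (0, 1) := by
      rcases hor with h | h
      · exact ⟨.sb, h, rfl⟩
      · exact ⟨.db, h, rfl⟩
    obtain ⟨c', p', hred, hn', hc⟩ := step_redcnt h₂ n₂ h₃
    have heq := ih n₁ hred hn'
    rw [hc, ← heq, hd₃]
    show (b, e + 1) = (b, e) + (0, 1)
    simp [Prod.ext_iff]

end UL

/-- **Uniform length of normalising reductions** (Theorem 1, second item):
any two reduction paths from `t` to a `→w`-normal form have the same number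
of dB-steps and the same number of s!/d!-steps. -/
theorem unique_length {t p₁ p₂ : Tm} {c₁ c₂ : ℕ × ℕ}
    (h₁ : RedCnt t c₁ p₁) (h₂ : RedCnt t c₂ p₂)
    (n₁ : ∀ u, ¬ StepW p₁ u) (n₂ : ∀ u, ¬ StepW p₂ u) :
    c₁ = c₂ := by
  exact UL.redcnt_unique h₁ n₁ h₂ n₂
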